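/- Let {τ_n}_{n≥1} be piecewise expanding maps of [0,1] (each piecewise strictly monotone and C² on the intervals of a finite partition, with |τ_n'| ≥ s > 1 on each piece), converging uniformly to a map τ, and assume all τ_n satisfy the Lasota–Yorke inequality V(P_{τ_n} f) ≤ A·V(f) + B·∫|f| dm with common constants 0 ≤ A < 1 and B. Let f be a density of bounded variation on [0,1] and f_n = (1/n) Σ_{i=1}^n P_{τ_{(1,i)}} f, where τ_{(1,i)} = τ_i ∘ ⋯ ∘ τ_1. Then every L¹-limit f* of a convergent subsequence of {f_n} satisfies P_τ f* = f*; that is, the measure f*·m is an absolutely continuous τ-invariant measure. -/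

import Mathlib

open MeasureTheory Filter Topology
open scoped ENNReal

/-- Lebesgue measure on `[0,1]`. -/
noncomputable def m : Measure ℝ := volume.restrict (Set.Icc 0 1)

/-- `T : [0,1] → [0,1]` is piecewise expanding: there is a partition
`0 = a_0 < ⋯ < a_r = 1` such that on each open interval `(a_{i-1}, a_i)` the map `T`
is strictly monotone and `C²` with `|T'| ≥ s` there. -/
def PiecewiseExpanding (T : ℝ → ℝ) (s : ℝ) : Prop :=
  ∃ (r : ℕ) (a : ℕ → ℝ), 0 < r ∧ a 0 = 0 ∧ a r = 1 ∧
    (∀ i < r, a i < a (i + 1)) ∧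
    ∀ i < r,
      (StrictMonoOn T (Set.Ioo (a i) (a (i + 1))) ∨
        StrictAntiOn T (Set.Ioo (a i) (a (i + 1)))) ∧
      ContDiffOn ℝ 2 T (Set.Ioo (a i) (a (i + 1))) ∧
      ∀ x ∈ Set.Ioo (a i) (a (i + 1)),
        s ≤ |derivWithin T (Set.Ioo (a i) (a (i + 1))) x|

/-- `g` is a version of the Frobenius–Perron image of `f` under `T`:
`∫_A g dm = ∫_{T⁻¹(A)} f dm` for every Borel set `A`. -/
def IsFPImage (T : ℝ → ℝ) (f g : ℝ → ℝ) : Prop :=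
  ∀ A : Set ℝ, MeasurableSet A → ∫ x in A, g x ∂m = ∫ x in T ⁻¹' A, f x ∂m

/-- `opComp P n f = (P_n ∘ P_{n-1} ∘ ⋯ ∘ P_1) f` (with `opComp P 0 f = f`),
so `opComp P n f` represents `P_{τ_{(1,n)}} f = P_{τ_n} ⋯ P_{τ_1} f`. -/
def opComp (P : ℕ → (ℝ → ℝ) → (ℝ → ℝ)) : ℕ → (ℝ → ℝ) → (ℝ → ℝ)
  | 0 => fun f => f
  | n + 1 => fun f => P (n + 1) (opComp P n f)

/-!
Pair the averages `f_n` against a bounded uniformly continuous test function `ψ`. The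
Frobenius–Perron identity `∫ ψ · P_{τ_{i+1}} g_i = ∫ (ψ ∘ τ_{i+1}) · g_i` for the iterates
`g_i = P_{τ_{(1,i)}} f` turns `∫ ψ f_n - ∫ (ψ ∘ τ) f_n` into the Cesàro mean of the errors
`∫ (ψ ∘ τ_{i+1} - ψ ∘ τ) g_i`, which tend to `0` by uniform convergence, plus a telescoping
term of size `O(1/n)`. Along the subsequence the `L¹`-convergence gives
`∫ (ψ ∘ τ) f* = ∫ ψ f*`, and bounded uniformly continuous functions determine a finite Borel
measure, so `τ_* (f* m) = f* m`. The Lasota–Yorke inequality keeps every `g_i` of bounded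
variation, hence integrable, so that the `g_i` are densities.
-/

instance : IsFiniteMeasure m := by
  unfold m
  infer_instance

theorem BoundedVariationOn.integrableOn_Icc {f : ℝ → ℝ} {a b : ℝ}
    (hf : BoundedVariationOn f (Set.Icc a b)) : IntegrableOn f (Set.Icc a b) := by
  obtain ⟨p, q, hp, hq, rfl⟩ := hf.locallyBoundedVariationOn.exists_monotoneOn_sub_monotoneOn
  exact (hp.integrableOn_isCompact isCompact_Icc).sub (hq.integrableOn_isCompact isCompact_Icc)

theorem exists_mem_Ioo_or_mem_range {a : ℕ → ℝ} {r : ℕ} {x : ℝ} (h0 : a 0 ≤ x) (hr : x ≤ a r) :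
    (∃ i < r, x ∈ Set.Ioo (a i) (a (i + 1))) ∨ x ∈ Set.range a := by
  classical
  by_cases hx : x ∈ Set.range a
  · exact Or.inr hx
  have hxa : ∀ k, x ≠ a k := fun k h => hx ⟨k, h.symm⟩
  have hex : ∃ k, x < a k := ⟨r, hr.lt_of_ne (hxa r)⟩
  obtain ⟨i, hi⟩ := Nat.exists_eq_succ_of_ne_zero fun h : Nat.find hex = 0 =>
    (Nat.find_spec hex).not_ge (h ▸ h0)
  have hlt : x < a (i + 1) := by simpa [hi] using Nat.find_spec hex
  have hle : a i ≤ x := not_lt.1 (Nat.find_min hex (by omega))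
  have hir : i + 1 ≤ r := by simpa [hi] using Nat.find_min' hex (hr.lt_of_ne (hxa r))
  exact Or.inl ⟨i, hir, hle.lt_of_ne (hxa i).symm, hlt⟩

theorem PiecewiseExpanding.aemeasurable {T : ℝ → ℝ} {s : ℝ} (hT : PiecewiseExpanding T s) :
    AEMeasurable T m := by
  obtain ⟨r, a, -, ha0, har, -, hpiece⟩ := hT
  have hcover : Set.Icc 0 1 ⊆ (⋃ i : Fin r, Set.Ioo (a i) (a (i + 1))) ∪ Set.range a := by
    intro x hx
    rcases exists_mem_Ioo_or_mem_range (ha0 ▸ hx.1) (har ▸ hx.2) with ⟨i, hi, hxi⟩ | hxa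
    · exact Or.inl (Set.mem_iUnion.2 ⟨⟨i, hi⟩, hxi⟩)
    · exact Or.inr hxa
  refine AEMeasurable.mono_measure ?_ (Measure.restrict_mono hcover le_rfl)
  rw [aemeasurable_union_iff, aemeasurable_iUnion_iff,
    Measure.restrict_eq_zero.2 ((Set.countable_range a).measure_zero _)]
  exact ⟨fun i => ((hpiece i i.2).2.1.continuousOn).aemeasurable measurableSet_Ioo,
    aemeasurable_zero_measure⟩

theorem MeasureTheory.Measure.ext_of_forall_uniformContinuous_integral_eq {Ω : Type*}
    [PseudoMetricSpace Ω] [MeasurableSpace Ω] [BorelSpace Ω] {μ ν : Measure Ω} [IsFiniteMeasure μ]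
    [IsFiniteMeasure ν]
    (h : ∀ φ : Ω → ℝ, UniformContinuous φ → (∀ x, |φ x| ≤ 1) → ∫ x, φ x ∂μ = ∫ x, φ x ∂ν) :
    μ = ν := by
  have hclosed : ∀ F : Set Ω, IsClosed F → μ F = ν F := by
    intro F hF
    have hδ : ∀ n : ℕ, 0 < 1 / ((n : ℝ) + 1) := fun n => Nat.one_div_pos_of_nat
    have hμ := tendsto_integral_thickenedIndicator_of_isClosed μ hF hδ
      tendsto_one_div_add_atTop_nhds_zero_nat
    have hν := tendsto_integral_thickenedIndicator_of_isClosed ν hF hδ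
      tendsto_one_div_add_atTop_nhds_zero_nat
    have heq : ∀ n : ℕ, ∫ x, (thickenedIndicator (hδ n) F x : ℝ) ∂μ
        = ∫ x, (thickenedIndicator (hδ n) F x : ℝ) ∂ν := fun n =>
      h _ (uniformContinuous_subtype_val.comp
          (lipschitzWith_thickenedIndicator (hδ n) F).uniformContinuous)
        fun x => abs_le.2 ⟨by linarith [(thickenedIndicator (hδ n) F x).2],
          NNReal.coe_le_one.2 (thickenedIndicator_le_one (hδ n) F x)⟩
    simp_rw [heq] at hμ
    exact (measureReal_eq_measureReal_iff).1 (tendsto_nhds_unique hμ hν)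
  exact ext_of_generate_finite _ (BorelSpace.measurable_eq.trans borel_eq_generateFrom_isClosed)
    isPiSystem_isClosed hclosed (hclosed _ isClosed_univ)

section WithDensity

variable {α : Type*} [MeasurableSpace α] {μ : Measure α} {u : α → ℝ}

theorem withDensity_ofReal_apply [SFinite μ] (hu : Integrable u μ) (hu0 : 0 ≤ᵐ[μ] u)
    (s : Set α) :
    μ.withDensity (fun x => ENNReal.ofReal (u x)) s = ENNReal.ofReal (∫ x in s, u x ∂μ) := by
  rw [withDensity_apply' _ s,
    ofReal_integral_eq_lintegral_ofReal hu.restrict (ae_restrict_of_ae hu0)]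

theorem integral_withDensity_ofReal (hu : AEMeasurable u μ) (hu0 : 0 ≤ᵐ[μ] u) (φ : α → ℝ) :
    ∫ x, φ x ∂μ.withDensity (fun x => ENNReal.ofReal (u x)) = ∫ x, φ x * u x ∂μ := by
  rw [integral_withDensity_eq_integral_toReal_smul₀ hu.ennreal_ofReal
    (ae_of_all _ fun _ => ENNReal.ofReal_lt_top)]
  refine integral_congr_ae ?_
  filter_upwards [hu0] with x hx
  simp [ENNReal.toReal_ofReal hx, mul_comm]

theorem map_withDensity_ofReal_eq_self [PseudoMetricSpace α] [BorelSpace α]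
    {S : α → α} (hS : AEMeasurable S μ) (hu : Integrable u μ) (hu0 : 0 ≤ᵐ[μ] u)
    (h : ∀ φ : α → ℝ, UniformContinuous φ → (∀ x, |φ x| ≤ 1) →
      ∫ x, φ (S x) * u x ∂μ = ∫ x, φ x * u x ∂μ) :
    (μ.withDensity fun x => ENNReal.ofReal (u x)).map S
      = μ.withDensity fun x => ENNReal.ofReal (u x) := by
  have := isFiniteMeasure_withDensity_ofReal hu.2
  have hS' := hS.mono_ac (withDensity_absolutelyContinuous μ fun x => ENNReal.ofReal (u x))
  refine Measure.ext_of_forall_uniformContinuous_integral_eq fun φ hφ hφ1 => ?_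
  rw [integral_map hS' hφ.continuous.aestronglyMeasurable,
    integral_withDensity_ofReal hu.aemeasurable hu0,
    integral_withDensity_ofReal hu.aemeasurable hu0]
  exact h φ hφ hφ1

end WithDensity

section FrobeniusPerron

variable {T : ℝ → ℝ} {u v : ℝ → ℝ}

theorem IsFPImage.ae_nonneg (h : IsFPImage T u v) (hv : Integrable v m) (hu0 : 0 ≤ᵐ[m] u) :
    0 ≤ᵐ[m] v :=
  ae_nonneg_of_forall_setIntegral_nonneg hv fun A hA _ =>
    (h A hA).symm ▸ integral_nonneg_of_ae (ae_restrict_of_ae hu0)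

theorem IsFPImage.integral_eq (h : IsFPImage T u v) : ∫ x, v x ∂m = ∫ x, u x ∂m := by
  simpa using h Set.univ MeasurableSet.univ

theorem IsFPImage.map_withDensity (h : IsFPImage T u v) (hT : AEMeasurable T m)
    (hu : Integrable u m) (hu0 : 0 ≤ᵐ[m] u) (hv : Integrable v m) (hv0 : 0 ≤ᵐ[m] v) :
    (m.withDensity fun x => ENNReal.ofReal (u x)).map T
      = m.withDensity fun x => ENNReal.ofReal (v x) := by
  ext A hA
  rw [Measure.map_apply_of_aemeasurable (hT.mono_ac (withDensity_absolutelyContinuous _ _)) hA,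
    withDensity_ofReal_apply hu hu0, withDensity_ofReal_apply hv hv0, h A hA]

theorem IsFPImage.integral_mul_eq (h : IsFPImage T u v) (hT : AEMeasurable T m)
    (hu : Integrable u m) (hu0 : 0 ≤ᵐ[m] u) (hv : Integrable v m) (hv0 : 0 ≤ᵐ[m] v)
    {φ : ℝ → ℝ} (hφ : Continuous φ) :
    ∫ x, φ x * v x ∂m = ∫ x, φ (T x) * u x ∂m := by
  rw [← integral_withDensity_ofReal hv.aemeasurable hv0, ← h.map_withDensity hT hu hu0 hv hv0,
    integral_map (hT.mono_ac (withDensity_absolutelyContinuous _ _)) hφ.aestronglyMeasurable,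
    integral_withDensity_ofReal hu.aemeasurable hu0]

end FrobeniusPerron

section Iterates

variable {P : ℕ → (ℝ → ℝ) → (ℝ → ℝ)} {f : ℝ → ℝ}

theorem boundedVariationOn_opComp {s : Set ℝ}
    (hP : ∀ n, 1 ≤ n → ∀ g, BoundedVariationOn g s → BoundedVariationOn (P n g) s)
    (hf : BoundedVariationOn f s) : ∀ i, BoundedVariationOn (opComp P i f) s
  | 0 => hf
  | i + 1 => hP (i + 1) (by omega) _ (boundedVariationOn_opComp hP hf i)

variable {T : ℕ → ℝ → ℝ}

theorem isFPImage_opComp_succ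
    (hP : ∀ n, 1 ≤ n → ∀ g, Integrable g m → IsFPImage (T n) g (P n g))
    (hint : ∀ i, Integrable (opComp P i f) m) (i : ℕ) :
    IsFPImage (T (i + 1)) (opComp P i f) (opComp P (i + 1) f) :=
  hP (i + 1) (by omega) _ (hint i)

theorem ae_nonneg_opComp
    (hP : ∀ n, 1 ≤ n → ∀ g, Integrable g m → IsFPImage (T n) g (P n g))
    (hint : ∀ i, Integrable (opComp P i f) m) (hf0 : 0 ≤ᵐ[m] f) : ∀ i, 0 ≤ᵐ[m] opComp P i f
  | 0 => hf0
  | i + 1 =>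
    (isFPImage_opComp_succ hP hint i).ae_nonneg (hint (i + 1)) (ae_nonneg_opComp hP hint hf0 i)

theorem integral_opComp
    (hP : ∀ n, 1 ≤ n → ∀ g, Integrable g m → IsFPImage (T n) g (P n g))
    (hint : ∀ i, Integrable (opComp P i f) m) : ∀ i, ∫ x, opComp P i f x ∂m = ∫ x, f x ∂m
  | 0 => rfl
  | i + 1 => (isFPImage_opComp_succ hP hint i).integral_eq.trans (integral_opComp hP hint i)

end Iterates

theorem tendsto_cesaro_sub_of_succ_eq_add {e b c : ℕ → ℝ} (h : ∀ i, e (i + 1) = b i + c i)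
    (hc : Tendsto c atTop (𝓝 0)) {C : ℝ} (hb : ∀ i, |b i| ≤ C) :
    Tendsto (fun n : ℕ => 1 / (n : ℝ) * ∑ i ∈ Finset.Icc 1 n, (e i - b i)) atTop (𝓝 0) := by
  have hsum : ∀ n, ∑ i ∈ Finset.Icc 1 n, (e i - b i) = ∑ i ∈ Finset.range n, c i + (b 0 - b n) := by
    intro n
    induction n with
    | zero => simp
    | succ n ih =>
      rw [Finset.sum_Icc_succ_top (by omega), ih, Finset.sum_range_succ, h]
      ring
  have hbdd : Tendsto (fun n : ℕ => (n : ℝ)⁻¹ * (b 0 - b n)) atTop (𝓝 0) :=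
    tendsto_inv_atTop_nhds_zero_nat.zero_mul_isBoundedUnder_le
      ⟨2 * C, eventually_map.2 (Eventually.of_forall fun n => by
        simp only [Function.comp_apply, Real.norm_eq_abs]
        linarith [abs_sub (b 0) (b n), hb 0, hb n])⟩
  simpa [hsum, mul_add] using hc.cesaro.add hbdd

section Integrals

variable {α : Type*} [MeasurableSpace α] {μ : Measure α}

theorem TendstoUniformlyOn.aemeasurable_of_ae_mem {β : Type*} [PseudoMetricSpace β]
    [MeasurableSpace β] [BorelSpace β] {s : Set α} {T : ℕ → α → β} {S : α → β}
    (hTS : TendstoUniformlyOn T S atTop s) (hs : ∀ᵐ x ∂μ, x ∈ s)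
    (hT : ∀ᶠ n in atTop, AEMeasurable (T n) μ) : AEMeasurable S μ := by
  obtain ⟨N, hN⟩ := eventually_atTop.1 hT
  refine aemeasurable_of_tendsto_metrizable_ae' (fun n => hN (n + N) (by omega)) ?_
  filter_upwards [hs] with x hx using (hTS.tendsto_at hx).comp (tendsto_add_atTop_nat N)

theorem tendsto_integral_comp_sub_comp_mul {β : Type*} [UniformSpace β] {s : Set α}
    (hs : ∀ᵐ x ∂μ, x ∈ s) {T : ℕ → α → β} {S : α → β} (hT : TendstoUniformlyOn T S atTop s)
    {φ : β → ℝ} (hφ : UniformContinuous φ) {g : ℕ → α → ℝ} (hg : ∀ n, Integrable (g n) μ)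
    (hg0 : ∀ n, 0 ≤ᵐ[μ] g n) (hg1 : ∀ n, ∫ x, g n x ∂μ = 1) :
    Tendsto (fun n => ∫ x, (φ (T n x) - φ (S x)) * g n x ∂μ) atTop (𝓝 0) := by
  rw [Metric.tendsto_nhds]
  intro ε hε
  filter_upwards [Metric.tendstoUniformlyOn_iff.1 (hφ.comp_tendstoUniformlyOn hT) (ε / 2)
    (half_pos hε)] with n hn
  have hbound : ∀ᵐ x ∂μ, ‖(φ (T n x) - φ (S x)) * g n x‖ ≤ ε / 2 * g n x := by
    filter_upwards [hs, hg0 n] with x hx hgx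
    rw [norm_mul, Real.norm_of_nonneg hgx, ← dist_eq_norm, dist_comm]
    exact mul_le_mul_of_nonneg_right (hn x hx).le hgx
  calc dist (∫ x, (φ (T n x) - φ (S x)) * g n x ∂μ) 0
      ≤ ∫ x, ‖(φ (T n x) - φ (S x)) * g n x‖ ∂μ := by
        rw [dist_zero_right]; exact norm_integral_le_integral_norm _
    _ ≤ ∫ x, ε / 2 * g n x ∂μ :=
        integral_mono_of_nonneg (ae_of_all _ fun _ => norm_nonneg _) ((hg n).const_mul _) hbound
    _ < ε := by rw [integral_const_mul, hg1, mul_one]; exact half_lt_self hε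

variable {ι : Type*} {l : Filter ι} {F : ι → α → ℝ} {f : α → ℝ}

theorem tendsto_integral_mul_of_tendsto_integral_abs_sub (hF : ∀ i, Integrable (F i) μ)
    (hf : Integrable f μ) (hlim : Tendsto (fun i => ∫ x, |F i x - f x| ∂μ) l (𝓝 0))
    {w : α → ℝ} (hw : AEStronglyMeasurable w μ) {C : ℝ} (hwC : ∀ x, |w x| ≤ C) :
    Tendsto (fun i => ∫ x, w x * F i x ∂μ) l (𝓝 (∫ x, w x * f x ∂μ)) := by
  have hwC' : ∀ᵐ x ∂μ, ‖w x‖ ≤ C := ae_of_all _ hwC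
  rw [tendsto_iff_norm_sub_tendsto_zero]
  refine squeeze_zero (fun _ => norm_nonneg _) (fun i => ?_) (by simpa using hlim.const_mul C)
  calc ‖∫ x, w x * F i x ∂μ - ∫ x, w x * f x ∂μ‖ = ‖∫ x, w x * (F i x - f x) ∂μ‖ := by
        rw [← integral_sub ((hF i).bdd_mul hw hwC') (hf.bdd_mul hw hwC')]
        simp only [mul_sub]
    _ ≤ ∫ x, ‖w x * (F i x - f x)‖ ∂μ := norm_integral_le_integral_norm _
    _ ≤ ∫ x, C * |F i x - f x| ∂μ :=
        integral_mono_of_nonneg (ae_of_all _ fun _ => norm_nonneg _)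
          (((hF i).sub hf).abs.const_mul C) (ae_of_all _ fun x => by
            simp only [norm_mul, Real.norm_eq_abs]
            exact mul_le_mul_of_nonneg_right (hwC x) (abs_nonneg _))
    _ = C * ∫ x, |F i x - f x| ∂μ := integral_const_mul _ _

theorem ae_nonneg_of_tendsto_integral_abs_sub [l.NeBot] (hF : ∀ i, Integrable (F i) μ)
    (hF0 : ∀ i, 0 ≤ᵐ[μ] F i) (hf : Integrable f μ)
    (hlim : Tendsto (fun i => ∫ x, |F i x - f x| ∂μ) l (𝓝 0)) : 0 ≤ᵐ[μ] f := by
  refine ae_nonneg_of_forall_setIntegral_nonneg hf fun A hA _ => ?_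
  have hlimA := tendsto_integral_mul_of_tendsto_integral_abs_sub hF hf hlim
    (measurable_one.indicator hA).aestronglyMeasurable (C := 1)
    (fun x => by by_cases hx : x ∈ A <;> simp [hx])
  simp only [← Set.indicator_mul_left, Pi.one_apply, one_mul, integral_indicator hA] at hlimA
  exact ge_of_tendsto hlimA (Eventually.of_forall fun i =>
    integral_nonneg_of_ae (ae_restrict_of_ae (hF0 i)))

theorem integral_mul_const_mul_sum (w : α → ℝ) {g : ℕ → α → ℝ}
    (hg : ∀ i, Integrable (fun x => w x * g i x) μ) (c : ℝ) (t : Finset ℕ) :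
    ∫ x, w x * (c * ∑ i ∈ t, g i x) ∂μ = c * ∑ i ∈ t, ∫ x, w x * g i x ∂μ := by
  simp_rw [Finset.mul_sum, mul_left_comm (w _)]
  rw [integral_finsetSum _ fun i _ => (hg i).const_mul c]
  simp_rw [integral_const_mul]

end Integrals

section CesaroAverages

variable {T : ℕ → ℝ → ℝ} {S : ℝ → ℝ} {g : ℕ → ℝ → ℝ}

theorem tendsto_integral_mul_cesaro_sub_comp (hT : ∀ n, 1 ≤ n → AEMeasurable (T n) m)
    (hS : AEMeasurable S m) (hTS : TendstoUniformlyOn T S atTop (Set.Icc 0 1))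
    (hg : ∀ i, Integrable (g i) m) (hg0 : ∀ i, 0 ≤ᵐ[m] g i) (hg1 : ∀ i, ∫ x, g i x ∂m = 1)
    (hFP : ∀ i, IsFPImage (T (i + 1)) (g i) (g (i + 1)))
    {φ : ℝ → ℝ} (hφ : UniformContinuous φ) (hφ1 : ∀ x, |φ x| ≤ 1) :
    Tendsto (fun n : ℕ => ∫ x, φ x * (1 / (n : ℝ) * ∑ i ∈ Finset.Icc 1 n, g i x) ∂m
      - ∫ x, φ (S x) * (1 / (n : ℝ) * ∑ i ∈ Finset.Icc 1 n, g i x) ∂m) atTop (𝓝 0) := by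
  have hintφ : ∀ i, Integrable (fun x => φ x * g i x) m := fun i =>
    (hg i).bdd_mul hφ.continuous.aestronglyMeasurable (ae_of_all _ hφ1)
  have hmeas : ∀ {R : ℝ → ℝ}, AEMeasurable R m → AEStronglyMeasurable (fun x => φ (R x)) m :=
    fun hR => (hφ.continuous.measurable.comp_aemeasurable hR).aestronglyMeasurable
  have hintS : ∀ i, Integrable (fun x => φ (S x) * g i x) m := fun i =>
    (hg i).bdd_mul (hmeas hS) (ae_of_all _ fun _ => hφ1 _)
  have hintT : ∀ i, Integrable (fun x => φ (T (i + 1) x) * g i x) m := fun i =>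
    (hg i).bdd_mul (hmeas (hT (i + 1) (by omega))) (ae_of_all _ fun _ => hφ1 _)
  have hsucc : ∀ i, ∫ x, φ x * g (i + 1) x ∂m = ∫ x, φ (S x) * g i x ∂m
      + ∫ x, (φ (T (i + 1) x) - φ (S x)) * g i x ∂m := fun i => by
    simp_rw [sub_mul]
    rw [(hFP i).integral_mul_eq (hT (i + 1) (by omega)) (hg i) (hg0 i) (hg (i + 1))
        (hg0 (i + 1)) hφ.continuous,
      integral_sub (hintT i) (hintS i), add_sub_cancel]
  have hdiff := tendsto_integral_comp_sub_comp_mul (μ := m) (ae_restrict_mem measurableSet_Icc)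
    (fun u hu => (tendsto_add_atTop_nat 1).eventually (hTS u hu)) hφ hg hg0 hg1
  have hbdd : ∀ i, |∫ x, φ (S x) * g i x ∂m| ≤ 1 := fun i => by
    rw [← Real.norm_eq_abs]
    calc ‖∫ x, φ (S x) * g i x ∂m‖ ≤ ∫ x, ‖φ (S x) * g i x‖ ∂m := norm_integral_le_integral_norm _
      _ ≤ ∫ x, g i x ∂m := integral_mono_of_nonneg (ae_of_all _ fun _ => norm_nonneg _) (hg i)
          (by
            filter_upwards [hg0 i] with x hx
            rw [norm_mul, Real.norm_of_nonneg hx]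
            exact mul_le_of_le_one_left hx (hφ1 _))
      _ = 1 := hg1 i
  convert tendsto_cesaro_sub_of_succ_eq_add (e := fun i => ∫ x, φ x * g i x ∂m) hsucc hdiff hbdd
    using 2 with n
  rw [integral_mul_const_mul_sum _ hintφ, integral_mul_const_mul_sum _ hintS, ← mul_sub,
    ← Finset.sum_sub_distrib]

end CesaroAverages

theorem limit_of_cesaro_averages_is_invariant_density_general
    (s : ℝ)
    (τseq : ℕ → ℝ → ℝ) (τ : ℝ → ℝ)
    (hpe : ∀ n, 1 ≤ n → PiecewiseExpanding (τseq n) s)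
    (hconv : TendstoUniformlyOn τseq τ atTop (Set.Icc 0 1))
    (P : ℕ → (ℝ → ℝ) → (ℝ → ℝ))
    (hP : ∀ n, 1 ≤ n → ∀ g : ℝ → ℝ, Integrable g m → IsFPImage (τseq n) g (P n g))
    (A B : ℝ)
    (hLY : ∀ n, 1 ≤ n → ∀ g : ℝ → ℝ, BoundedVariationOn g (Set.Icc 0 1) →
      eVariationOn (P n g) (Set.Icc 0 1) ≤
        ENNReal.ofReal A * eVariationOn g (Set.Icc 0 1)
          + ENNReal.ofReal (B * ∫ x, |g x| ∂m))
    (f : ℝ → ℝ) (hfbv : BoundedVariationOn f (Set.Icc 0 1))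
    (hf0 : ∀ x, 0 ≤ f x) (hf1 : ∫ x, f x ∂m = 1)
    (fseq : ℕ → ℝ → ℝ)
    (hfseq : ∀ n x, fseq n x = (1 / (n : ℝ)) * ∑ i ∈ Finset.Icc 1 n, opComp P i f x)
    (fstar : ℝ → ℝ) (hfstar : Integrable fstar m)
    (φ : ℕ → ℕ) (hφ : StrictMono φ)
    (hlim : Tendsto (fun k => ∫ x, |fseq (φ k) x - fstar x| ∂m) atTop (𝓝 0)) :
    ∀ E : Set ℝ, MeasurableSet E →
      (m.withDensity fun x => ENNReal.ofReal (fstar x)) (τ ⁻¹' E)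
        = (m.withDensity fun x => ENNReal.ofReal (fstar x)) E := by
  intro E hE
  set g : ℕ → ℝ → ℝ := fun i => opComp P i f
  have hbv : ∀ i, BoundedVariationOn (g i) (Set.Icc 0 1) :=
    boundedVariationOn_opComp (fun n hn g hg => ne_top_of_le_ne_top (by finiteness) (hLY n hn g hg))
      hfbv
  have hg : ∀ i, Integrable (g i) m := fun i => (hbv i).integrableOn_Icc
  have hg0 : ∀ i, 0 ≤ᵐ[m] g i := ae_nonneg_opComp hP hg (ae_of_all _ hf0)
  have hg1 : ∀ i, ∫ x, g i x ∂m = 1 := fun i => (integral_opComp hP hg i).trans hf1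
  have hτseq : ∀ n, 1 ≤ n → AEMeasurable (τseq n) m := fun n hn => (hpe n hn).aemeasurable
  have hτ : AEMeasurable τ m := hconv.aemeasurable_of_ae_mem (ae_restrict_mem measurableSet_Icc)
    (eventually_atTop.2 ⟨1, hτseq⟩)
  obtain rfl : fseq = fun (n : ℕ) x => 1 / (n : ℝ) * ∑ i ∈ Finset.Icc 1 n, g i x := funext₂ hfseq
  have hfseq_int : ∀ n : ℕ, Integrable (fun x => 1 / (n : ℝ) * ∑ i ∈ Finset.Icc 1 n, g i x) m :=
    fun n => (integrable_finsetSum _ fun i _ => hg i).const_mul _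
  have hstar0 : 0 ≤ᵐ[m] fstar := ae_nonneg_of_tendsto_integral_abs_sub (fun k => hfseq_int _)
    (fun k => by
      filter_upwards [ae_all_iff.2 hg0] with x hx
      exact mul_nonneg (by positivity) (Finset.sum_nonneg fun i _ => hx i)) hfstar hlim
  have hinv : ∀ ψ : ℝ → ℝ, UniformContinuous ψ → (∀ x, |ψ x| ≤ 1) →
      ∫ x, ψ (τ x) * fstar x ∂m = ∫ x, ψ x * fstar x ∂m := fun ψ hψ hψ1 => by
    have hlimψ := tendsto_integral_mul_of_tendsto_integral_abs_sub (fun k => hfseq_int _) hfstar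
      hlim hψ.continuous.aestronglyMeasurable hψ1
    have hlimψτ := tendsto_integral_mul_of_tendsto_integral_abs_sub (fun k => hfseq_int _) hfstar
      hlim (hψ.continuous.measurable.comp_aemeasurable hτ).aestronglyMeasurable fun x => hψ1 (τ x)
    have hcesaro := (tendsto_integral_mul_cesaro_sub_comp hτseq hτ hconv hg hg0 hg1
      (fun i => isFPImage_opComp_succ hP hg i) hψ hψ1).comp hφ.tendsto_atTop
    exact (sub_eq_zero.1 (tendsto_nhds_unique (hlimψ.sub hlimψτ) hcesaro)).symm
  rw [← Measure.map_apply_of_aemeasurable (hτ.mono_ac (withDensity_absolutelyContinuous _ _)) hE,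
    map_withDensity_ofReal_eq_self hτ hfstar hstar0 hinv]

/-- For piecewise expanding maps `τ_n ⇉ τ` whose Frobenius–Perron operators satisfy a
common Lasota–Yorke inequality, every `L¹`-limit `f*` of a convergent subsequence of
the Cesàro averages `f_n = (1/n) Σ_{i=1}^n P_{τ_{(1,i)}} f` of a BV density `f`
satisfies `P_τ f* = f*`: the measure `f*·m` is an absolutely continuous
`τ`-invariant measure. -/
theorem limit_of_cesaro_averages_is_invariant_density
    (s : ℝ) (hs : 1 < s)
    (τseq : ℕ → ℝ → ℝ) (τ : ℝ → ℝ)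
    (hpe : ∀ n, 1 ≤ n → PiecewiseExpanding (τseq n) s)
    (hconv : TendstoUniformlyOn τseq τ atTop (Set.Icc 0 1))
    (P : ℕ → (ℝ → ℝ) → (ℝ → ℝ))
    (hP : ∀ n, 1 ≤ n → ∀ g : ℝ → ℝ, Integrable g m → IsFPImage (τseq n) g (P n g))
    (A B : ℝ) (hA0 : 0 ≤ A) (hA1 : A < 1)
    (hLY : ∀ n, 1 ≤ n → ∀ g : ℝ → ℝ, BoundedVariationOn g (Set.Icc 0 1) →
      eVariationOn (P n g) (Set.Icc 0 1) ≤
        ENNReal.ofReal A * eVariationOn g (Set.Icc 0 1)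
          + ENNReal.ofReal (B * ∫ x, |g x| ∂m))
    (f : ℝ → ℝ) (hfbv : BoundedVariationOn f (Set.Icc 0 1))
    (hf0 : ∀ x, 0 ≤ f x) (hfint : Integrable f m) (hf1 : ∫ x, f x ∂m = 1)
    (fseq : ℕ → ℝ → ℝ)
    (hfseq : ∀ n x, fseq n x = (1 / (n : ℝ)) * ∑ i ∈ Finset.Icc 1 n, opComp P i f x)
    (fstar : ℝ → ℝ) (hfstar : Integrable fstar m)
    (φ : ℕ → ℕ) (hφ : StrictMono φ) (hφ1 : ∀ k, 1 ≤ φ k)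
    (hlim : Tendsto (fun k => ∫ x, |fseq (φ k) x - fstar x| ∂m) atTop (𝓝 0)) :
    ∀ E : Set ℝ, MeasurableSet E →
      (m.withDensity fun x => ENNReal.ofReal (fstar x)) (τ ⁻¹' E)
        = (m.withDensity fun x => ENNReal.ofReal (fstar x)) E :=
  limit_of_cesaro_averages_is_invariant_density_general s τseq τ hpe hconv P hP A B hLY f hfbv hf0
    hf1 fseq hfseq fstar hfstar φ hφ hlim
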